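/- arXiv:1802.04123 — 2 statements merged into one kernel-verified Lean document; each statement's English description precedes it below -/
import Mathlib

section
/- For any artinian lattice L, the group K(L) is a free abelian group, and the sub-semigroup K⁺(L) is a free commutative monoid; a basis is given by the classes of the simple intervals (composition factors) of L provided by the Jordan–Hölder–Dedekind theorem. -/
/-- A preorder has *finite length* if there is a uniform bound on the length of strict
chains `a₀ < a₁ < … < aₘ`. -/
def BoundedChainLength (L : Type*) [Preorder L] : Prop :=
  ∃ n : ℕ, ∀ (m : ℕ) (f : Fin (m + 1) → L), StrictMono f → m ≤ n

/-- Generators of the K-group of a lattice: intervals `[a,b]` with `a ≤ b`. -/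
def IntervalGen (L : Type*) [Lattice L] : Type _ := {p : L × L // p.1 ≤ p.2}

/-- The relations defining the K-group: `[a,b] + [b,c] = [a,c]` and `[a, a⊔b] = [a⊓b, b]`. -/
def KRelSet (L : Type*) [Lattice L] : Set (FreeAbelianGroup (IntervalGen L)) :=
  {x | ∃ (a b c : L) (hab : a ≤ b) (hbc : b ≤ c),
      x = FreeAbelianGroup.of (⟨(a, b), hab⟩ : IntervalGen L)
        + FreeAbelianGroup.of (⟨(b, c), hbc⟩ : IntervalGen L)
        - FreeAbelianGroup.of (⟨(a, c), hab.trans hbc⟩ : IntervalGen L)} ∪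
  {x | ∃ a b : L,
      x = FreeAbelianGroup.of (⟨(a, a ⊔ b), le_sup_left⟩ : IntervalGen L)
        - FreeAbelianGroup.of (⟨(a ⊓ b, b), inf_le_right⟩ : IntervalGen L)}

/-- The K-group `K(L)` of a lattice: the abelian group generated by intervals `[a,b]`,
`a ≤ b`, modulo the relations `[a,b] + [b,c] = [a,c]` and `[a, a⊔b] = [a⊓b, b]`. -/
abbrev KGroup (L : Type*) [Lattice L] : Type _ :=
  FreeAbelianGroup (IntervalGen L) ⧸ AddSubgroup.closure (KRelSet L)

open Classical in
/-- The class of the interval `[a,b]` in `K(L)` (by convention `0` if `a ≤ b` fails). -/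
noncomputable def Kcls {L : Type*} [Lattice L] (a b : L) : KGroup L :=
  if h : a ≤ b then QuotientAddGroup.mk (FreeAbelianGroup.of (⟨(a, b), h⟩ : IntervalGen L))
  else 0


/-- The sub-semigroup (submonoid) `K⁺(L) ⊆ K(L)` generated by the classes `[a,b]`, `a < b`. -/
def KPos (L : Type*) [Lattice L] : AddSubmonoid (KGroup L) :=
  AddSubmonoid.closure {x | ∃ a b : L, a < b ∧ x = Kcls a b}

/-- An interval `[a,b]`, `a < b`, is simple if there is no element strictly between `a`
and `b`. -/
def SimpleInterval {L : Type*} [Lattice L] (a b : L) : Prop :=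
  a < b ∧ ∀ c : L, a < c → c < b → False

/-- The set of classes in `K(L)` of simple intervals of `L`. -/
def SimpleClasses (L : Type*) [Lattice L] : Set (KGroup L) :=
  {x | ∃ a b : L, SimpleInterval a b ∧ x = Kcls a b}

/-!
By Jordan–Hölder, the multiset of composition factors of an interval `[a, b]`, each taken as
its class in `K(L)`, does not depend on the composition series. It is additive under
concatenation of series, and pushing a series of `[a ⊓ b, b]` forward along `x ↦ x ⊔ a` gives a
series of `[a, a ⊔ b]` with the same factors (modularity). Counting factors is therefore a
homomorphism `K(L) → ℤ^(simple classes)` sending each simple class to a basis vector, which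
gives linear independence; conversely every `[a, b]` is the sum of its composition factors,
which gives spanning and writes every element of `K⁺(L)` as an `ℕ`-combination.
-/

theorem BoundedChainLength.dual {α : Type*} [Preorder α] (h : BoundedChainLength α) :
    BoundedChainLength αᵒᵈ := by
  obtain ⟨n, hn⟩ := h
  exact ⟨n, fun m f hf => hn m (fun i => OrderDual.ofDual (f i.rev))
    fun i j hij => hf (Fin.rev_lt_rev.mpr hij)⟩

theorem BoundedChainLength.wellFoundedGT {α : Type*} [Preorder α] (h : BoundedChainLength α) :
    WellFoundedGT α := by
  obtain ⟨n, hn⟩ := h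
  refine ⟨RelEmbedding.wellFounded_iff_isEmpty.mpr ⟨fun f => ?_⟩⟩
  have := hn (n + 1) (fun i => f i) fun i j hij => f.map_rel_iff.mpr hij
  omega

theorem BoundedChainLength.wellFoundedLT {α : Type*} [Preorder α] (h : BoundedChainLength α) :
    WellFoundedLT α :=
  h.dual.wellFoundedGT

theorem exists_compositionSeries_of_le {L : Type*} [Lattice L] [IsModularLattice L]
    [WellFoundedLT L] [WellFoundedGT L] {a b : L} (h : a ≤ b) :
    ∃ s : CompositionSeries L, s.head = a ∧ s.last = b := by
  obtain ⟨f, rfl, n, rfl, hf⟩ := exists_covBy_seq_of_wellFoundedLT_wellFoundedGT_of_le h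
  exact ⟨⟨n, fun i => f i, fun i => hf i i.2⟩, rfl, rfl⟩

theorem sup_inf_eq_of_inf_le {L : Type*} [Lattice L] [IsModularLattice L] {x y a : L}
    (hxy : x ≤ y) (ha : a ⊓ y ≤ x) : (x ⊔ a) ⊓ y = x := by
  rw [sup_inf_assoc_of_le a hxy, sup_eq_left.mpr ha]

theorem CovBy.sup_of_inf_le {L : Type*} [Lattice L] [IsModularLattice L] {x y a : L}
    (h : x ⋖ y) (ha : a ⊓ y ≤ x) : x ⊔ a ⋖ y ⊔ a := by
  have := covBy_sup_of_inf_covBy_left (a := y) (b := x ⊔ a)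
    (by rwa [inf_comm, sup_inf_eq_of_inf_le h.le ha])
  rwa [← sup_assoc, sup_eq_left.mpr h.le] at this

theorem simpleInterval_iff_covBy {L : Type*} [Lattice L] {a b : L} :
    SimpleInterval a b ↔ a ⋖ b :=
  Iff.rfl

namespace KGroup

variable {L : Type*} [Lattice L]

theorem Kcls_of_le {a b : L} (h : a ≤ b) :
    Kcls a b = QuotientAddGroup.mk (FreeAbelianGroup.of (α := IntervalGen L) ⟨(a, b), h⟩) :=
  dif_pos h

theorem Kcls_add_Kcls {a b c : L} (hab : a ≤ b) (hbc : b ≤ c) :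
    Kcls a b + Kcls b c = Kcls a c := by
  rw [Kcls_of_le hab, Kcls_of_le hbc, Kcls_of_le (hab.trans hbc), ← QuotientAddGroup.mk_add,
    QuotientAddGroup.eq_iff_sub_mem]
  exact AddSubgroup.subset_closure (Or.inl ⟨a, b, c, hab, hbc, rfl⟩)

theorem Kcls_self (a : L) : Kcls a a = 0 :=
  add_eq_left.mp (Kcls_add_Kcls le_rfl le_rfl)

theorem Kcls_sup_eq_Kcls_inf (a b : L) : Kcls a (a ⊔ b) = Kcls (a ⊓ b) b := by
  rw [Kcls_of_le le_sup_left, Kcls_of_le inf_le_right, QuotientAddGroup.eq_iff_sub_mem]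
  exact AddSubgroup.subset_closure (Or.inr ⟨a, b, rfl⟩)

theorem Kcls_eq_Kcls_sup [IsModularLattice L] {x y a : L} (hxy : x ≤ y) (ha : a ⊓ y ≤ x) :
    Kcls x y = Kcls (x ⊔ a) (y ⊔ a) := by
  have := Kcls_sup_eq_Kcls_inf (x ⊔ a) y
  rwa [sup_inf_eq_of_inf_le hxy ha, sup_right_comm, sup_eq_right.mpr hxy, eq_comm] at this

theorem eq_top_of_Kcls_mem {H : AddSubgroup (KGroup L)} (h : ∀ a b : L, a ≤ b → Kcls a b ∈ H) :
    H = ⊤ := by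
  refine eq_top_iff.mpr fun x _ => QuotientAddGroup.induction_on x fun z => ?_
  induction z using FreeAbelianGroup.induction_on with
  | zero => exact zero_mem H
  | of p => exact Kcls_of_le p.2 ▸ h _ _ p.2
  | neg z hz => exact neg_mem hz
  | add z w hz hw => exact add_mem hz hw

def lift {G : Type*} [AddCommGroup G] (f : L → L → G)
    (hadd : ∀ a b c : L, a ≤ b → b ≤ c → f a b + f b c = f a c)
    (hsup : ∀ a b : L, f a (a ⊔ b) = f (a ⊓ b) b) : KGroup L →+ G :=
  QuotientAddGroup.lift _ (FreeAbelianGroup.lift fun p : IntervalGen L => f p.1.1 p.1.2) <| by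
    rw [AddSubgroup.closure_le]
    -- `erw`: the relators in `KRelSet` are elaborated over the subtype underlying `IntervalGen L`.
    rintro _ (⟨a, b, c, hab, hbc, rfl⟩ | ⟨a, b, rfl⟩)
    · refine AddMonoidHom.mem_ker.mpr ?_
      erw [map_sub, map_add, FreeAbelianGroup.lift_apply_of, FreeAbelianGroup.lift_apply_of,
        FreeAbelianGroup.lift_apply_of]
      exact sub_eq_zero.mpr (hadd a b c hab hbc)
    · refine AddMonoidHom.mem_ker.mpr ?_
      erw [map_sub, FreeAbelianGroup.lift_apply_of, FreeAbelianGroup.lift_apply_of]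
      exact sub_eq_zero.mpr (hsup a b)

theorem lift_Kcls {G : Type*} [AddCommGroup G] (f : L → L → G)
    (hadd : ∀ a b c : L, a ≤ b → b ≤ c → f a b + f b c = f a c)
    (hsup : ∀ a b : L, f a (a ⊔ b) = f (a ⊓ b) b) {a b : L} (h : a ≤ b) :
    lift f hadd hsup (Kcls a b) = f a b := by
  rw [Kcls_of_le h]
  exact FreeAbelianGroup.lift_apply_of _ _

end KGroup

section SimpleClass

variable {L : Type*} [Lattice L]

noncomputable def CovBy.simpleClass {a b : L} (h : a ⋖ b) : SimpleClasses L :=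
  ⟨Kcls a b, a, b, simpleInterval_iff_covBy.mpr h, rfl⟩

theorem CovBy.simpleClass_congr {a b a' b' : L} (h : a ⋖ b) (h' : a' ⋖ b') (ha : a = a')
    (hb : b = b') : h.simpleClass = h'.simpleClass := by
  subst ha hb; rfl

end SimpleClass

namespace CompositionSeries

open RelSeries

variable {L : Type*} [Lattice L] [IsModularLattice L]

noncomputable def factors (s : CompositionSeries L) : Multiset (SimpleClasses L) :=
  ∑ i : Fin s.length, {(s.step i).simpleClass}

theorem factors_of_length_eq_zero {s : CompositionSeries L} (h : s.length = 0) :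
    s.factors = 0 := by
  rw [factors, Finset.univ_eq_empty_iff.mpr (h ▸ Fin.isEmpty'), Finset.sum_empty]

theorem factors_snoc (s : CompositionSeries L) (x : L) (h : s.last ⋖ x) :
    factors (s.snoc x h) = s.factors + {h.simpleClass} := by
  change ∑ i : Fin (s.length + 1), _ = _
  rw [Fin.sum_univ_castSucc]
  congr 1
  · refine Finset.sum_congr rfl fun i _ => congrArg _ (CovBy.simpleClass_congr _ _ ?_ ?_)
    · exact snoc_castSucc s x h i.castSucc
    · exact snoc_castSucc s x h i.succ
  · refine congrArg _ (CovBy.simpleClass_congr _ _ (snoc_castSucc s x h _) ?_)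
    exact last_snoc' s x h

theorem factors_smash (s t : CompositionSeries L) (h : s.last = t.head) :
    factors (s.smash t h) = s.factors + t.factors := by
  change ∑ i : Fin (s.length + t.length), _ = _
  rw [Fin.sum_univ_add]
  congr 1 <;> refine Finset.sum_congr rfl fun i _ => congrArg _ (CovBy.simpleClass_congr _ _ ?_ ?_)
  exacts [smash_castAdd h i, smash_succ_castAdd h i, smash_natAdd h i, smash_succ_natAdd h i]

theorem Equivalent.factors_eq {s t : CompositionSeries L} (h : s.Equivalent t) :
    s.factors = t.factors := by
  obtain ⟨e, he⟩ := h
  rw [factors, factors, ← e.sum_comp]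
  refine Finset.sum_congr rfl fun i _ => congrArg _ (Subtype.ext ?_)
  exact (he i).rel (fun p q => Kcls p.1 p.2 = Kcls q.1 q.2) rfl Eq.symm Eq.trans
    fun {x y} _ => KGroup.Kcls_sup_eq_Kcls_inf x y

theorem factors_eq_of_head_eq_of_last_eq {s t : CompositionSeries L} (hh : s.head = t.head)
    (hl : s.last = t.last) : s.factors = t.factors :=
  (jordan_holder s t hh hl).factors_eq

theorem sum_factors (s : CompositionSeries L) :
    (s.factors.map Subtype.val).sum = Kcls s.head s.last := by
  induction s using RelSeries.inductionOn' with
  | singleton x => rw [factors_of_length_eq_zero rfl, Multiset.map_zero, Multiset.sum_zero,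
      head_singleton, last_singleton, KGroup.Kcls_self]
  | snoc s x h ih =>
    rw [factors_snoc, Multiset.map_add, Multiset.sum_add, ih, head_snoc, last_snoc,
      Multiset.map_singleton, Multiset.sum_singleton]
    exact KGroup.Kcls_add_Kcls (le_last_of_mem s.head_mem) h.le

theorem inf_le_of_inf_last_le_head (s : CompositionSeries L) {a : L}
    (ha : a ⊓ s.last ≤ s.head) (i j : Fin (s.length + 1)) : a ⊓ s i ≤ s j :=
  (inf_le_inf_left a (le_last i)).trans (ha.trans (head_le j))

def supRight (s : CompositionSeries L) (a : L) (ha : a ⊓ s.last ≤ s.head) :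
    CompositionSeries L where
  length := s.length
  toFun i := s i ⊔ a
  step i := (s.step i).sup_of_inf_le (s.inf_le_of_inf_last_le_head ha _ _)

theorem factors_supRight (s : CompositionSeries L) (a : L) (ha : a ⊓ s.last ≤ s.head) :
    factors (s.supRight a ha) = s.factors :=
  Finset.sum_congr rfl fun i _ => congrArg _ <| Subtype.ext <|
    (KGroup.Kcls_eq_Kcls_sup (s.step i).le (s.inf_le_of_inf_last_le_head ha _ _)).symm

end CompositionSeries

open Classical in
/-- Independent of the chosen series by Jordan–Hölder (`compositionFactors_head_last`);
`0` when `[a, b]` has no composition series. -/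
noncomputable def compositionFactors {L : Type*} [Lattice L] [IsModularLattice L] (a b : L) :
    Multiset (SimpleClasses L) :=
  if h : ∃ s : CompositionSeries L, s.head = a ∧ s.last = b then h.choose.factors else 0

theorem CompositionSeries.compositionFactors_head_last {L : Type*} [Lattice L]
    [IsModularLattice L] (s : CompositionSeries L) :
    compositionFactors s.head s.last = s.factors := by
  have h : ∃ t : CompositionSeries L, t.head = s.head ∧ t.last = s.last := ⟨s, rfl, rfl⟩
  rw [compositionFactors, dif_pos h]
  exact factors_eq_of_head_eq_of_last_eq h.choose_spec.1 h.choose_spec.2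

section FiniteLength

open CompositionSeries RelSeries

variable {L : Type*} [Lattice L] [IsModularLattice L] [WellFoundedLT L] [WellFoundedGT L]

theorem compositionFactors_add {a b c : L} (hab : a ≤ b) (hbc : b ≤ c) :
    compositionFactors a b + compositionFactors b c = compositionFactors a c := by
  obtain ⟨s, rfl, rfl⟩ := exists_compositionSeries_of_le hab
  obtain ⟨t, ht, rfl⟩ := exists_compositionSeries_of_le hbc
  have key := compositionFactors_head_last (s.smash t ht.symm)
  rw [head_smash, last_smash, factors_smash] at key
  rw [key, compositionFactors_head_last, ← ht, compositionFactors_head_last]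

theorem compositionFactors_sup_eq_inf (a b : L) :
    compositionFactors a (a ⊔ b) = compositionFactors (a ⊓ b) b := by
  obtain ⟨s, hs, rfl⟩ := exists_compositionSeries_of_le (inf_le_right : a ⊓ b ≤ b)
  have key : compositionFactors (s.head ⊔ a) (s.last ⊔ a) = compositionFactors s.head s.last :=
    (compositionFactors_head_last (s.supRight a hs.ge)).trans
      ((factors_supRight s a hs.ge).trans (compositionFactors_head_last s).symm)
  rwa [hs, sup_eq_right.mpr inf_le_left, sup_comm] at key

theorem sum_compositionFactors {a b : L} (h : a ≤ b) :
    ((compositionFactors a b).map Subtype.val).sum = Kcls a b := by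
  obtain ⟨s, rfl, rfl⟩ := exists_compositionSeries_of_le h
  rw [compositionFactors_head_last, sum_factors]

end FiniteLength

theorem CovBy.compositionFactors_eq {L : Type*} [Lattice L] [IsModularLattice L] {a b : L}
    (h : a ⋖ b) : compositionFactors a b = {h.simpleClass} :=
  (CompositionSeries.compositionFactors_head_last ⟨1, ![a, b], Fin.forall_fin_one.mpr h⟩).trans
    (Fin.sum_univ_one _)

theorem LinearIndependent.natCombination_injective {ι M : Type*} [AddCommGroup M] {v : ι → M}
    (hv : LinearIndependent ℤ v) :
    Function.Injective fun c : ι →₀ ℕ => c.sum fun i n => (n : ℤ) • v i := by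
  intro c c' h
  simp only [natCast_zsmul] at h
  exact hv.restrict_scalars' (R := ℕ) (by simpa only [Finsupp.linearCombination_apply] using h)

namespace KGroup

variable {L : Type*} [Lattice L] [IsModularLattice L] [WellFoundedLT L] [WellFoundedGT L]

open Classical in
noncomputable def multiplicities : KGroup L →+ (SimpleClasses L →₀ ℤ) :=
  let count : Multiset (SimpleClasses L) →+ (SimpleClasses L →₀ ℤ) :=
    (Finsupp.mapRange.addMonoidHom (Nat.castAddMonoidHom ℤ)).comp
      Multiset.toFinsupp.toAddMonoidHom
  lift (fun a b => count (compositionFactors a b))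
    (fun _ _ _ hab hbc => by rw [← map_add, compositionFactors_add hab hbc])
    (fun a b => by rw [compositionFactors_sup_eq_inf])

theorem multiplicities_simpleClass (s : SimpleClasses L) :
    multiplicities (s : KGroup L) = Finsupp.single s 1 := by
  obtain ⟨a, b, hab, hs⟩ := s.2
  have hcov : a ⋖ b := simpleInterval_iff_covBy.mp hab
  have hclass : hcov.simpleClass = s := Subtype.ext hs.symm
  rw [hs, multiplicities, lift_Kcls _ _ _ hcov.le, hcov.compositionFactors_eq, hclass]
  simp

theorem linearIndependent_simpleClasses :
    LinearIndependent ℤ (fun s : SimpleClasses L => (s : KGroup L)) := by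
  refine LinearIndependent.of_comp (multiplicities (L := L)).toIntLinearMap ?_
  have hcomp : multiplicities.toIntLinearMap ∘ (fun s : SimpleClasses L => (s : KGroup L)) =
      fun s => Finsupp.single s 1 :=
    funext multiplicities_simpleClass
  rw [hcomp]
  exact Finsupp.linearIndependent_single_one ℤ _

theorem Kcls_mem_closure_simpleClasses {a b : L} (h : a ≤ b) :
    Kcls a b ∈ AddSubmonoid.closure (SimpleClasses L) := by
  rw [← sum_compositionFactors h]
  refine AddSubmonoid.multiset_sum_mem _ _ fun x hx => ?_
  obtain ⟨s, -, rfl⟩ := Multiset.mem_map.mp hx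
  exact AddSubmonoid.subset_closure s.2

theorem span_simpleClasses : Submodule.span ℤ (SimpleClasses L) = ⊤ :=
  Submodule.toAddSubgroup_eq_top.mp <| eq_top_of_Kcls_mem fun _ _ h =>
    AddSubmonoid.closure_le.mpr Submodule.subset_span (Kcls_mem_closure_simpleClasses h)

theorem exists_natCombination_of_mem_KPos {x : KGroup L} (hx : x ∈ KPos L) :
    ∃ c : SimpleClasses L →₀ ℕ, (c.sum fun s n => (n : ℤ) • (s : KGroup L)) = x := by
  have hcl : KPos L ≤ AddSubmonoid.closure (SimpleClasses L) :=
    AddSubmonoid.closure_le.mpr fun _ ⟨_, _, hab, hy⟩ => hy ▸ Kcls_mem_closure_simpleClasses hab.le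
  have hx' := hcl hx
  rw [← Subtype.range_coe (s := SimpleClasses L), AddSubmonoid.mem_closure_range_iff] at hx'
  obtain ⟨c, rfl⟩ := hx'
  exact ⟨c, by simp only [natCast_zsmul]⟩

end KGroup

theorem kgroup_free_abelian_on_simple_classes_general
    (L : Type*) [Lattice L] [IsModularLattice L]
    (hlen : BoundedChainLength L) :
    LinearIndependent ℤ (fun s : SimpleClasses L => (s : KGroup L)) ∧
    Submodule.span ℤ (SimpleClasses L) = (⊤ : Submodule ℤ (KGroup L)) ∧
    (∀ x ∈ KPos L, ∃! c : SimpleClasses L →₀ ℕ,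
      (c.sum fun s n => (n : ℤ) • (s : KGroup L)) = x) := by
  have := hlen.wellFoundedLT
  have := hlen.wellFoundedGT
  have hli := KGroup.linearIndependent_simpleClasses (L := L)
  refine ⟨hli, KGroup.span_simpleClasses, fun x hx => ?_⟩
  obtain ⟨c, rfl⟩ := KGroup.exists_natCombination_of_mem_KPos hx
  exact ⟨c, rfl, fun c' hc' => hli.natCombination_injective hc'⟩

/-- for an artinian lattice `L` (nonempty modular lattice of finite length,
with `⊥` and `⊤`), the group `K(L)` is free abelian with basis given by the classes of
the simple intervals (composition factors) of `L`, and the sub-semigroup `K⁺(L)` is the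
free commutative monoid on these classes: every element of `K⁺(L)` is uniquely a finite
`ℕ`-linear combination of classes of simple intervals. -/
theorem kgroup_free_abelian_on_simple_classes
    (L : Type*) [Lattice L] [BoundedOrder L] [IsModularLattice L]
    (hlen : BoundedChainLength L) :
    LinearIndependent ℤ (fun s : SimpleClasses L => (s : KGroup L)) ∧
    Submodule.span ℤ (SimpleClasses L) = (⊤ : Submodule ℤ (KGroup L)) ∧
    (∀ x ∈ KPos L, ∃! c : SimpleClasses L →₀ ℕ,
      (c.sum fun s n => (n : ℤ) • (s : KGroup L)) = x) :=
  kgroup_free_abelian_on_simple_classes_general L hlen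
end

section
/- Let A be a finite-dimensional lozenge algebra. Then with respect to the inner products on A⁰, A¹ = A^{1,0} ⊕ A^{0,1}, and A², the adjoints of the differentials are given by ∂* = i[Λ,∂̄], ∂̄* = −i[Λ,∂], and d* = i[Λ, ∂̄ − ∂], where Λ is extended by 0 on A⁰ ⊕ A¹. In particular, ⟨∂a, b⟩ = ⟨a, iΛ(∂̄b)⟩ for all a ∈ A⁰ and b ∈ A^{1,0}, and ⟨∂̄a, b⟩ = ⟨a, −iΛ(∂b)⟩ for all a ∈ A⁰ and b ∈ A^{0,1}. -/
/-!
Both sides of each identity split over the bidegree components and match component by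
component. As `τ` kills exact elements, the Leibniz rule moves `d` across the trace:
`τ(da · b) = -τ(a · db)` for `a ∈ A⁰` and `τ(dy · f) = τ(y · df)` for `y ∈ A¹`. This turns
the `A^{1,0}`-part of `⟨∂u, v⟩` into the `A⁰`-part of `⟨u, iΛ∂̄v⟩` (via `ωΛ = id` on `A²`),
and its `A²`-part, once `Λ(c)* ω = c*` has removed the Lefschetz operator, into the
`A^{0,1}`-part of `⟨u, -i∂̄Λv⟩`. The case of `∂̄` is the mirror image, and `d = ∂ + ∂̄`.
-/

/-- A lozenge algebra: a ℤ-graded unital associative ℂ-algebra `A = A⁰ ⊕ A¹ ⊕ A²`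
concentrated in degrees 0,1,2 (with `A¹ = A^{1,0} ⊕ A^{0,1}`), equipped with a degree 1
derivation `d` with `d² = 0`, a central curvature `θ ∈ A²`, a ℂ-antilinear involution
`*`, a trace `τ : A² → ℂ` (extended by `0` to all of `A`), a Kähler element `ω ∈ A²`
with inverse Lefschetz operator `Λ` (extended by `0` on `A⁰ ⊕ A¹`), positive definite
Hermitian forms on each graded piece, and the Yang–Mills condition `d(Λθ) = 0`. -/
structure LozengeAlgebra (A : Type*) [Ring A] [Algebra ℂ A] where
  A0 : Submodule ℂ A
  A10 : Submodule ℂ A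
  A01 : Submodule ℂ A
  A2 : Submodule ℂ A
  p0 : A →ₗ[ℂ] A
  p10 : A →ₗ[ℂ] A
  p01 : A →ₗ[ℂ] A
  p2 : A →ₗ[ℂ] A
  d : A →ₗ[ℂ] A
  Lam : A →ₗ[ℂ] A
  st : A → A
  tau : A →ₗ[ℂ] ℂ
  theta : A
  omega : A
  -- the projections realize the direct sum decomposition A = A⁰ ⊕ A^{1,0} ⊕ A^{0,1} ⊕ A²
  p0_mem : ∀ x : A, p0 x ∈ A0
  p10_mem : ∀ x : A, p10 x ∈ A10
  p01_mem : ∀ x : A, p01 x ∈ A01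
  p2_mem : ∀ x : A, p2 x ∈ A2
  decomp : ∀ x : A, p0 x + p10 x + p01 x + p2 x = x
  proj_eq : ∀ x0 ∈ A0, ∀ x10 ∈ A10, ∀ x01 ∈ A01, ∀ x2 ∈ A2,
    p0 (x0 + x10 + x01 + x2) = x0 ∧ p10 (x0 + x10 + x01 + x2) = x10 ∧
    p01 (x0 + x10 + x01 + x2) = x01 ∧ p2 (x0 + x10 + x01 + x2) = x2
  -- multiplicative grading
  one_mem : (1 : A) ∈ A0
  mul00 : ∀ a ∈ A0, ∀ b ∈ A0, a * b ∈ A0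
  mul0_10 : ∀ a ∈ A0, ∀ b ∈ A10, a * b ∈ A10 ∧ b * a ∈ A10
  mul0_01 : ∀ a ∈ A0, ∀ b ∈ A01, a * b ∈ A01 ∧ b * a ∈ A01
  mul0_2 : ∀ a ∈ A0, ∀ b ∈ A2, a * b ∈ A2 ∧ b * a ∈ A2
  mul10_10 : ∀ a ∈ A10, ∀ b ∈ A10, a * b = 0
  mul10_01 : ∀ a ∈ A10, ∀ b ∈ A01, a * b ∈ A2 ∧ b * a ∈ A2
  mul01_01 : ∀ a ∈ A01, ∀ b ∈ A01, a * b ∈ A2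
  mul1_2 : ∀ a : A, (a ∈ A10 ∨ a ∈ A01) → ∀ b ∈ A2, a * b = 0 ∧ b * a = 0
  mul2_2 : ∀ a ∈ A2, ∀ b ∈ A2, a * b = 0
  -- the differential
  d0_mem : ∀ x ∈ A0, p10 (d x) + p01 (d x) = d x
  d10_mem : ∀ x ∈ A10, d x ∈ A2
  d01_mem : ∀ x ∈ A01, d x ∈ A2
  d2_zero : ∀ x ∈ A2, d x = 0
  d_sq : ∀ x : A, d (d x) = 0
  leibniz0 : ∀ a ∈ A0, ∀ b : A, d (a * b) = d a * b + a * d b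
  leibniz1 : ∀ a : A, (a ∈ A10 ∨ a ∈ A01) → ∀ b : A, d (a * b) = d a * b - a * d b
  leibniz2 : ∀ a ∈ A2, ∀ b : A, d (a * b) = d a * b + a * d b
  -- the curvature
  theta_mem : theta ∈ A2
  theta_central : ∀ a : A, theta * a = a * theta
  -- the ℂ-antilinear involution
  st_add : ∀ x y : A, st (x + y) = st x + st y
  st_smul : ∀ (c : ℂ) (x : A), st (c • x) = (starRingEnd ℂ c) • st x
  st_invol : ∀ x : A, st (st x) = x
  st_one : st 1 = 1
  st_mem0 : ∀ x ∈ A0, st x ∈ A0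
  st_mem10 : ∀ x ∈ A10, st x ∈ A01
  st_mem01 : ∀ x ∈ A01, st x ∈ A10
  st_mem2 : ∀ x ∈ A2, st x ∈ A2
  st_mul0 : ∀ a ∈ A0, ∀ b : A, st (a * b) = st b * st a ∧ st (b * a) = st a * st b
  st_mul1 : ∀ a b : A, (a ∈ A10 ∨ a ∈ A01) → (b ∈ A10 ∨ b ∈ A01) →
    st (a * b) = -(st b * st a)
  st_d : ∀ x : A, st (d x) = d (st x)
  st_theta : st theta = -theta
  -- the trace
  tau_zero0 : ∀ x ∈ A0, tau x = 0
  tau_zero10 : ∀ x ∈ A10, tau x = 0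
  tau_zero01 : ∀ x ∈ A01, tau x = 0
  tau_comm0 : ∀ a ∈ A0, ∀ b : A, tau (a * b) = tau (b * a)
  tau_anticomm1 : ∀ a b : A, (a ∈ A10 ∨ a ∈ A01) → (b ∈ A10 ∨ b ∈ A01) →
    tau (a * b) = -tau (b * a)
  tau_d : ∀ x : A, tau (d x) = 0
  tau_star : ∀ x ∈ A2, tau (st x) = starRingEnd ℂ (tau x)
  -- the Kähler element and the Lefschetz operators
  omega_mem : omega ∈ A2
  omega_st : st omega = omega
  omega_comm : ∀ a ∈ A0, omega * a = a * omega
  Lam_mem : ∀ x : A, Lam x ∈ A0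
  Lam_zero0 : ∀ x ∈ A0, Lam x = 0
  Lam_zero10 : ∀ x ∈ A10, Lam x = 0
  Lam_zero01 : ∀ x ∈ A01, Lam x = 0
  Lam_left_inv : ∀ a ∈ A0, Lam (omega * a) = a
  Lam_right_inv : ∀ b ∈ A2, omega * Lam b = b
  -- positive definiteness of the four Hermitian forms
  pos0 : ∀ a ∈ A0, a ≠ 0 →
    0 < (tau (omega * (st a * a))).re ∧ (tau (omega * (st a * a))).im = 0
  pos10 : ∀ a ∈ A10, a ≠ 0 →
    0 < (-Complex.I * tau (st a * a)).re ∧ (-Complex.I * tau (st a * a)).im = 0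
  pos01 : ∀ a ∈ A01, a ≠ 0 →
    0 < (Complex.I * tau (st a * a)).re ∧ (Complex.I * tau (st a * a)).im = 0
  pos2 : ∀ a ∈ A2, a ≠ 0 →
    0 < (tau (omega * (st (Lam a) * Lam a))).re ∧
      (tau (omega * (st (Lam a) * Lam a))).im = 0
  -- the Yang–Mills condition
  ym : d (Lam theta) = 0

namespace LozengeAlgebra

variable {A : Type*} [Ring A] [Algebra ℂ A] (Lz : LozengeAlgebra A)

/-- The operator `∂` (the `A^{1,0}`-component of `d` on `A⁰`, and `d` on `A^{0,1}`). -/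
def del (x : A) : A := Lz.p10 (Lz.d (Lz.p0 x)) + Lz.d (Lz.p01 x)

/-- The operator `∂̄` (the `A^{0,1}`-component of `d` on `A⁰`, and `d` on `A^{1,0}`). -/
def delbar (x : A) : A := Lz.p01 (Lz.d (Lz.p0 x)) + Lz.d (Lz.p10 x)

/-- The total inner product on `A = A⁰ ⊕ A^{1,0} ⊕ A^{0,1} ⊕ A²`, the orthogonal sum of
the Hermitian forms `τ(ω a* b)` on `A⁰`, `−iτ(a* b)` on `A^{1,0}`, `iτ(a* b)` on
`A^{0,1}`, and `τ(ω Λ(a)* Λ(b))` on `A²`. -/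
noncomputable def innerL (u v : A) : ℂ :=
  Lz.tau (Lz.omega * (Lz.st (Lz.p0 u) * Lz.p0 v))
    + (-Complex.I) * Lz.tau (Lz.st (Lz.p10 u) * Lz.p10 v)
    + Complex.I * Lz.tau (Lz.st (Lz.p01 u) * Lz.p01 v)
    + Lz.tau (Lz.omega * (Lz.st (Lz.Lam (Lz.p2 u)) * Lz.Lam (Lz.p2 v)))

end LozengeAlgebra

namespace LozengeAlgebra

variable {A : Type*} [Ring A] [Algebra ℂ A] (Lz : LozengeAlgebra A)

lemma projs_of_eq_add {x x0 x10 x01 x2 : A} (h0 : x0 ∈ Lz.A0) (h10 : x10 ∈ Lz.A10)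
    (h01 : x01 ∈ Lz.A01) (h2 : x2 ∈ Lz.A2) (h : x = x0 + x10 + x01 + x2) :
    Lz.p0 x = x0 ∧ Lz.p10 x = x10 ∧ Lz.p01 x = x01 ∧ Lz.p2 x = x2 := by
  subst h
  exact Lz.proj_eq x0 h0 x10 h10 x01 h01 x2 h2

lemma st_zero : Lz.st 0 = 0 := by
  simpa using Lz.st_smul 0 0

lemma mul01_01_eq_zero {x y : A} (hx : x ∈ Lz.A01) (hy : y ∈ Lz.A01) : x * y = 0 := by
  have h := congrArg Lz.st (Lz.st_mul1 x y (Or.inr hx) (Or.inr hy))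
  rwa [Lz.mul10_10 _ (Lz.st_mem01 y hy) _ (Lz.st_mem01 x hx), neg_zero, Lz.st_invol,
    Lz.st_zero] at h

section Bidegree

variable {a b : A} (ha : a ∈ Lz.A0)
include ha

lemma d_mul_of_mem_A10 (hb : b ∈ Lz.A10) : Lz.d a * b = Lz.p01 (Lz.d a) * b := by
  conv_lhs => rw [← Lz.d0_mem a ha]
  rw [add_mul, Lz.mul10_10 _ (Lz.p10_mem _) b hb, zero_add]

lemma d_mul_of_mem_A01 (hb : b ∈ Lz.A01) : Lz.d a * b = Lz.p10 (Lz.d a) * b := by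
  conv_lhs => rw [← Lz.d0_mem a ha]
  rw [add_mul, Lz.mul01_01_eq_zero (Lz.p01_mem _) hb, add_zero]

lemma mul_d_of_mem_A10 (hb : b ∈ Lz.A10) : b * Lz.d a = b * Lz.p01 (Lz.d a) := by
  conv_lhs => rw [← Lz.d0_mem a ha]
  rw [mul_add, Lz.mul10_10 b hb _ (Lz.p10_mem _), zero_add]

lemma mul_d_of_mem_A01 (hb : b ∈ Lz.A01) : b * Lz.d a = b * Lz.p10 (Lz.d a) := by
  conv_lhs => rw [← Lz.d0_mem a ha]
  rw [mul_add, Lz.mul01_01_eq_zero hb (Lz.p01_mem _), add_zero]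

lemma projs_d_st :
    Lz.p10 (Lz.d (Lz.st a)) = Lz.st (Lz.p01 (Lz.d a)) ∧
      Lz.p01 (Lz.d (Lz.st a)) = Lz.st (Lz.p10 (Lz.d a)) := by
  have hd : Lz.d (Lz.st a) = 0 + Lz.st (Lz.p01 (Lz.d a)) + Lz.st (Lz.p10 (Lz.d a)) + 0 := by
    rw [← Lz.st_d, zero_add, add_zero, ← Lz.st_add, add_comm, Lz.d0_mem a ha]
  obtain ⟨-, h10, h01, -⟩ := Lz.projs_of_eq_add (zero_mem _) (Lz.st_mem01 _ (Lz.p01_mem _))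
    (Lz.st_mem10 _ (Lz.p10_mem _)) (zero_mem _) hd
  exact ⟨h10, h01⟩

end Bidegree

lemma tau_d_mul_of_mem_A0 {a : A} (ha : a ∈ Lz.A0) (b : A) :
    Lz.tau (Lz.d a * b) = -Lz.tau (a * Lz.d b) := by
  have h := Lz.tau_d (a * b)
  rw [Lz.leibniz0 a ha b, map_add] at h
  linear_combination h

lemma tau_d_mul_of_mem_A1 {y : A} (hy : y ∈ Lz.A10 ∨ y ∈ Lz.A01) (f : A) :
    Lz.tau (Lz.d y * f) = Lz.tau (y * Lz.d f) := by
  have h := Lz.tau_d (y * f)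
  rw [Lz.leibniz1 y hy f, map_sub] at h
  linear_combination h

lemma omega_mul_mul_comm {g : A} (hg : g ∈ Lz.A0) (f : A) :
    Lz.omega * (g * f) = g * (Lz.omega * f) := by
  rw [← mul_assoc, Lz.omega_comm g hg, mul_assoc]

lemma tau_omega_mul_Lam {g c : A} (hg : g ∈ Lz.A0) (hc : c ∈ Lz.A2) :
    Lz.tau (Lz.omega * (g * Lz.Lam c)) = Lz.tau (g * c) := by
  rw [Lz.omega_mul_mul_comm hg, Lz.Lam_right_inv c hc]

lemma tau_omega_st_Lam_mul {c : A} (hc : c ∈ Lz.A2) (f : A) :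
    Lz.tau (Lz.omega * (Lz.st (Lz.Lam c) * f)) = Lz.tau (Lz.st c * f) := by
  have hst : Lz.st c = Lz.st (Lz.Lam c) * Lz.omega := by
    rw [← Lz.omega_st, ← (Lz.st_mul0 _ (Lz.Lam_mem c) Lz.omega).2, Lz.Lam_right_inv c hc]
  rw [Lz.omega_mul_mul_comm (Lz.st_mem0 _ (Lz.Lam_mem c)), ← mul_assoc, hst]

lemma tau_st_p10_d_mul {a b : A} (ha : a ∈ Lz.A0) (hb : b ∈ Lz.A10) :
    Lz.tau (Lz.st (Lz.p10 (Lz.d a)) * b) = -Lz.tau (Lz.st a * Lz.d b) := by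
  rw [← (Lz.projs_d_st ha).2, ← Lz.d_mul_of_mem_A10 (Lz.st_mem0 a ha) hb,
    Lz.tau_d_mul_of_mem_A0 (Lz.st_mem0 a ha)]

lemma tau_st_p01_d_mul {a b : A} (ha : a ∈ Lz.A0) (hb : b ∈ Lz.A01) :
    Lz.tau (Lz.st (Lz.p01 (Lz.d a)) * b) = -Lz.tau (Lz.st a * Lz.d b) := by
  rw [← (Lz.projs_d_st ha).1, ← Lz.d_mul_of_mem_A01 (Lz.st_mem0 a ha) hb,
    Lz.tau_d_mul_of_mem_A0 (Lz.st_mem0 a ha)]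

lemma tau_omega_st_Lam_d_mul_of_mem_A01 {x c : A} (hx : x ∈ Lz.A01) :
    Lz.tau (Lz.omega * (Lz.st (Lz.Lam (Lz.d x)) * Lz.Lam c)) =
      Lz.tau (Lz.st x * Lz.p01 (Lz.d (Lz.Lam c))) := by
  rw [Lz.tau_omega_st_Lam_mul (Lz.d01_mem x hx), Lz.st_d,
    Lz.tau_d_mul_of_mem_A1 (Or.inl (Lz.st_mem01 x hx)),
    Lz.mul_d_of_mem_A10 (Lz.Lam_mem c) (Lz.st_mem01 x hx)]

lemma tau_omega_st_Lam_d_mul_of_mem_A10 {x c : A} (hx : x ∈ Lz.A10) :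
    Lz.tau (Lz.omega * (Lz.st (Lz.Lam (Lz.d x)) * Lz.Lam c)) =
      Lz.tau (Lz.st x * Lz.p10 (Lz.d (Lz.Lam c))) := by
  rw [Lz.tau_omega_st_Lam_mul (Lz.d10_mem x hx), Lz.st_d,
    Lz.tau_d_mul_of_mem_A1 (Or.inr (Lz.st_mem10 x hx)),
    Lz.mul_d_of_mem_A01 (Lz.Lam_mem c) (Lz.st_mem10 x hx)]

lemma Lam_eq_Lam_p2 (v : A) : Lz.Lam v = Lz.Lam (Lz.p2 v) := by
  conv_lhs => rw [← Lz.decomp v]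
  rw [map_add, map_add, map_add, Lz.Lam_zero0 _ (Lz.p0_mem v),
    Lz.Lam_zero10 _ (Lz.p10_mem v), Lz.Lam_zero01 _ (Lz.p01_mem v), zero_add, zero_add,
    zero_add]

lemma d_eq_del_add_delbar (u : A) : Lz.d u = Lz.del u + Lz.delbar u := by
  conv_lhs => rw [← Lz.decomp u]
  rw [map_add, map_add, map_add, Lz.d2_zero _ (Lz.p2_mem u), ← Lz.d0_mem _ (Lz.p0_mem u)]
  unfold del delbar
  abel

lemma del_projs (u : A) :
    Lz.p0 (Lz.del u) = 0 ∧ Lz.p10 (Lz.del u) = Lz.p10 (Lz.d (Lz.p0 u)) ∧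
    Lz.p01 (Lz.del u) = 0 ∧ Lz.p2 (Lz.del u) = Lz.d (Lz.p01 u) :=
  Lz.projs_of_eq_add (zero_mem _) (Lz.p10_mem _) (zero_mem _) (Lz.d01_mem _ (Lz.p01_mem u))
    (by unfold del; abel)

lemma delbar_projs (u : A) :
    Lz.p0 (Lz.delbar u) = 0 ∧ Lz.p10 (Lz.delbar u) = 0 ∧
    Lz.p01 (Lz.delbar u) = Lz.p01 (Lz.d (Lz.p0 u)) ∧ Lz.p2 (Lz.delbar u) = Lz.d (Lz.p10 u) :=
  Lz.projs_of_eq_add (zero_mem _) (zero_mem _) (Lz.p01_mem _) (Lz.d10_mem _ (Lz.p10_mem u))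
    (by unfold delbar; abel)

lemma Lam_projs (v : A) :
    Lz.p0 (Lz.Lam v) = Lz.Lam v ∧ Lz.p10 (Lz.Lam v) = 0 ∧
    Lz.p01 (Lz.Lam v) = 0 ∧ Lz.p2 (Lz.Lam v) = 0 :=
  Lz.projs_of_eq_add (Lz.Lam_mem v) (zero_mem _) (zero_mem _) (zero_mem _) (by abel)

lemma Lam_delbar_sub_delbar_Lam_projs (v : A) :
    Lz.p0 (Lz.Lam (Lz.delbar v) - Lz.delbar (Lz.Lam v)) = Lz.Lam (Lz.d (Lz.p10 v)) ∧
    Lz.p10 (Lz.Lam (Lz.delbar v) - Lz.delbar (Lz.Lam v)) = 0 ∧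
    Lz.p01 (Lz.Lam (Lz.delbar v) - Lz.delbar (Lz.Lam v)) =
      -Lz.p01 (Lz.d (Lz.Lam (Lz.p2 v))) ∧
    Lz.p2 (Lz.Lam (Lz.delbar v) - Lz.delbar (Lz.Lam v)) = 0 := by
  refine Lz.projs_of_eq_add (Lz.Lam_mem _) (zero_mem _) (neg_mem (Lz.p01_mem _)) (zero_mem _) ?_
  obtain ⟨h0, h10, -, -⟩ := Lz.Lam_projs v
  simp only [delbar, map_add, Lz.Lam_zero01 _ (Lz.p01_mem _), h0, h10, map_zero, add_zero,
    ← Lz.Lam_eq_Lam_p2]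
  abel

lemma Lam_del_sub_del_Lam_projs (v : A) :
    Lz.p0 (Lz.Lam (Lz.del v) - Lz.del (Lz.Lam v)) = Lz.Lam (Lz.d (Lz.p01 v)) ∧
    Lz.p10 (Lz.Lam (Lz.del v) - Lz.del (Lz.Lam v)) = -Lz.p10 (Lz.d (Lz.Lam (Lz.p2 v))) ∧
    Lz.p01 (Lz.Lam (Lz.del v) - Lz.del (Lz.Lam v)) = 0 ∧
    Lz.p2 (Lz.Lam (Lz.del v) - Lz.del (Lz.Lam v)) = 0 := by
  refine Lz.projs_of_eq_add (Lz.Lam_mem _) (neg_mem (Lz.p10_mem _)) (zero_mem _) (zero_mem _) ?_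
  obtain ⟨h0, -, h01, -⟩ := Lz.Lam_projs v
  simp only [del, map_add, Lz.Lam_zero10 _ (Lz.p10_mem _), h0, h01, map_zero, add_zero,
    ← Lz.Lam_eq_Lam_p2]
  abel

lemma innerL_add_left (s t v : A) :
    Lz.innerL (s + t) v = Lz.innerL s v + Lz.innerL t v := by
  simp only [innerL, map_add, Lz.st_add, add_mul, mul_add]
  ring

lemma innerL_add_right (u s t : A) :
    Lz.innerL u (s + t) = Lz.innerL u s + Lz.innerL u t := by
  simp only [innerL, map_add, mul_add]
  ring

lemma innerL_smul_right (c : ℂ) (u t : A) :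
    Lz.innerL u (c • t) = c * Lz.innerL u t := by
  simp only [innerL, map_smul, mul_smul_comm, smul_eq_mul]
  ring

theorem innerL_del_left (u v : A) :
    Lz.innerL (Lz.del u) v =
      Lz.innerL u (Complex.I • (Lz.Lam (Lz.delbar v) - Lz.delbar (Lz.Lam v))) := by
  obtain ⟨e0, e10, e01, e2⟩ := Lz.del_projs u
  obtain ⟨f0, f10, f01, f2⟩ := Lz.Lam_delbar_sub_delbar_Lam_projs v
  rw [innerL_smul_right]
  simp only [innerL, e0, e10, e01, e2, f0, f10, f01, f2, Lz.st_zero, zero_mul, mul_zero,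
    map_zero, map_neg, mul_neg, add_zero, zero_add]
  rw [Lz.tau_st_p10_d_mul (Lz.p0_mem u) (Lz.p10_mem v),
    Lz.tau_omega_st_Lam_d_mul_of_mem_A01 (Lz.p01_mem u),
    Lz.tau_omega_mul_Lam (Lz.st_mem0 _ (Lz.p0_mem u)) (Lz.d10_mem _ (Lz.p10_mem v))]
  linear_combination Lz.tau (Lz.st (Lz.p01 u) * Lz.p01 (Lz.d (Lz.Lam (Lz.p2 v)))) *
    Complex.I_mul_I

theorem innerL_delbar_left (u v : A) :
    Lz.innerL (Lz.delbar u) v =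
      Lz.innerL u ((-Complex.I) • (Lz.Lam (Lz.del v) - Lz.del (Lz.Lam v))) := by
  obtain ⟨e0, e10, e01, e2⟩ := Lz.delbar_projs u
  obtain ⟨f0, f10, f01, f2⟩ := Lz.Lam_del_sub_del_Lam_projs v
  rw [innerL_smul_right]
  simp only [innerL, e0, e10, e01, e2, f0, f10, f01, f2, Lz.st_zero, zero_mul, mul_zero,
    map_zero, map_neg, mul_neg, add_zero, zero_add]
  rw [Lz.tau_st_p01_d_mul (Lz.p0_mem u) (Lz.p01_mem v),
    Lz.tau_omega_st_Lam_d_mul_of_mem_A10 (Lz.p10_mem u),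
    Lz.tau_omega_mul_Lam (Lz.st_mem0 _ (Lz.p0_mem u)) (Lz.d01_mem _ (Lz.p01_mem v))]
  linear_combination Lz.tau (Lz.st (Lz.p10 u) * Lz.p10 (Lz.d (Lz.Lam (Lz.p2 v)))) *
    Complex.I_mul_I

theorem innerL_d_left (u v : A) :
    Lz.innerL (Lz.d u) v =
      Lz.innerL u (Complex.I •
        ((Lz.Lam (Lz.delbar v) - Lz.delbar (Lz.Lam v))
          - (Lz.Lam (Lz.del v) - Lz.del (Lz.Lam v)))) := by
  rw [Lz.d_eq_del_add_delbar, innerL_add_left, innerL_del_left, innerL_delbar_left,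
    ← innerL_add_right]
  congr 1
  module

end LozengeAlgebra

open LozengeAlgebra in
theorem lozenge_kaehler_adjoints_general
    (A : Type*) [Ring A] [Algebra ℂ A]
    (Lz : LozengeAlgebra A) :
    (∀ u v : A, Lz.innerL (Lz.del u) v =
      Lz.innerL u (Complex.I • (Lz.Lam (Lz.delbar v) - Lz.delbar (Lz.Lam v)))) ∧
    (∀ u v : A, Lz.innerL (Lz.delbar u) v =
      Lz.innerL u ((-Complex.I) • (Lz.Lam (Lz.del v) - Lz.del (Lz.Lam v)))) ∧
    (∀ u v : A, Lz.innerL (Lz.d u) v =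
      Lz.innerL u (Complex.I •
        ((Lz.Lam (Lz.delbar v) - Lz.delbar (Lz.Lam v))
          - (Lz.Lam (Lz.del v) - Lz.del (Lz.Lam v))))) ∧
    (∀ a ∈ Lz.A0, ∀ b ∈ Lz.A10,
      (-Complex.I) * Lz.tau (Lz.st (Lz.p10 (Lz.d a)) * b) =
        Lz.tau (Lz.omega * (Lz.st a * (Complex.I • Lz.Lam (Lz.d b))))) ∧
    (∀ a ∈ Lz.A0, ∀ b ∈ Lz.A01,
      Complex.I * Lz.tau (Lz.st (Lz.p01 (Lz.d a)) * b) =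
        Lz.tau (Lz.omega * (Lz.st a * ((-Complex.I) • Lz.Lam (Lz.d b))))) := by
  refine ⟨Lz.innerL_del_left, Lz.innerL_delbar_left, Lz.innerL_d_left, ?_, ?_⟩
  · intro a ha b hb
    rw [mul_smul_comm, mul_smul_comm, map_smul, smul_eq_mul,
      Lz.tau_omega_mul_Lam (Lz.st_mem0 a ha) (Lz.d10_mem b hb), Lz.tau_st_p10_d_mul ha hb]
    ring
  · intro a ha b hb
    rw [mul_smul_comm, mul_smul_comm, map_smul, smul_eq_mul,
      Lz.tau_omega_mul_Lam (Lz.st_mem0 a ha) (Lz.d01_mem b hb), Lz.tau_st_p01_d_mul ha hb]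
    ring

open LozengeAlgebra in
/-- in a finite-dimensional lozenge algebra the adjoints of the
differentials with respect to the inner products are given by the Kähler identities
`∂* = i[Λ,∂̄]`, `∂̄* = −i[Λ,∂]`, `d* = i[Λ, ∂̄ − ∂]` (with `Λ` extended by `0` on
`A⁰ ⊕ A¹`).  In particular `⟨∂a, b⟩ = ⟨a, iΛ(∂̄b)⟩` for `a ∈ A⁰`, `b ∈ A^{1,0}`, and
`⟨∂̄a, b⟩ = ⟨a, −iΛ(∂b)⟩` for `a ∈ A⁰`, `b ∈ A^{0,1}`. -/
theorem lozenge_kaehler_adjoints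
    (A : Type*) [Ring A] [Algebra ℂ A] [FiniteDimensional ℂ A]
    (Lz : LozengeAlgebra A) :
    (∀ u v : A, Lz.innerL (Lz.del u) v =
      Lz.innerL u (Complex.I • (Lz.Lam (Lz.delbar v) - Lz.delbar (Lz.Lam v)))) ∧
    (∀ u v : A, Lz.innerL (Lz.delbar u) v =
      Lz.innerL u ((-Complex.I) • (Lz.Lam (Lz.del v) - Lz.del (Lz.Lam v)))) ∧
    (∀ u v : A, Lz.innerL (Lz.d u) v =
      Lz.innerL u (Complex.I •
        ((Lz.Lam (Lz.delbar v) - Lz.delbar (Lz.Lam v))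
          - (Lz.Lam (Lz.del v) - Lz.del (Lz.Lam v))))) ∧
    (∀ a ∈ Lz.A0, ∀ b ∈ Lz.A10,
      (-Complex.I) * Lz.tau (Lz.st (Lz.p10 (Lz.d a)) * b) =
        Lz.tau (Lz.omega * (Lz.st a * (Complex.I • Lz.Lam (Lz.d b))))) ∧
    (∀ a ∈ Lz.A0, ∀ b ∈ Lz.A01,
      Complex.I * Lz.tau (Lz.st (Lz.p01 (Lz.d a)) * b) =
        Lz.tau (Lz.omega * (Lz.st a * ((-Complex.I) • Lz.Lam (Lz.d b))))) :=
  lozenge_kaehler_adjoints_general A Lz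
end
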